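/- Let G be a finite simple graph and k a natural number. Let G' be the graph obtained from G as follows: subdivide every edge of G (for each edge e = xy delete e and add a new subdivision vertex v_e adjacent to x and y), and attach to every original vertex u of G (called a branching vertex) k+3 new pendant vertices, each adjacent only to u. Then for every set S of vertices of G' with |S| ≤ k: the graph G' − S has an isolated vertex if and only if S contains at least one branching vertex. -/
import Mathlib


open SimpleGraph

/-- The graph `G'` obtained from `G` by subdividing every edge (for each edge `e` a new
subdivision vertex adjacent to the two endpoints of `e`) and attaching `k+3` pendant
vertices to every original (branching) vertex. -/
def subdividePendant {V : Type*} (G : SimpleGraph V) (k : ℕ) :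
    SimpleGraph (V ⊕ (↥G.edgeSet ⊕ V × Fin (k + 3))) :=
  SimpleGraph.fromRel (fun a b =>
    match a, b with
    | .inl u, .inr (.inl e) => u ∈ (e : Sym2 V)
    | .inl u, .inr (.inr p) => p.1 = u
    | _, _ => False)

lemma exists_pendant_not_mem {V : Type} [Fintype V] (G : SimpleGraph V) (k : ℕ)
    (S : Finset (V ⊕ (↥G.edgeSet ⊕ V × Fin (k + 3)))) (hS : S.card ≤ k) (u : V) :
    ∃ i : Fin (k + 3), (Sum.inr (Sum.inr (u, i)) : V ⊕ (↥G.edgeSet ⊕ V × Fin (k + 3))) ∉ S := by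
  classical
  by_contra h
  push_neg at h
  have hsub : Finset.univ.image
      (fun i : Fin (k + 3) =>
        (Sum.inr (Sum.inr (u, i)) : V ⊕ (↥G.edgeSet ⊕ V × Fin (k + 3)))) ⊆ S := by
    intro x hx
    simp only [Finset.mem_image, Finset.mem_univ, true_and] at hx
    obtain ⟨i, rfl⟩ := hx
    exact h i
  have hcard := Finset.card_le_card hsub
  rw [Finset.card_image_of_injective _ (by intro i j hij; simpa using hij)] at hcard
  simp at hcard
  omega

/-- For every set `S` of vertices of `G'` with `|S| ≤ k`: the graph `G' − S` has an
isolated vertex iff `S` contains at least one branching vertex. -/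
theorem subdividePendant_isolated_iff {V : Type} [Fintype V] (G : SimpleGraph V) (k : ℕ)
    (S : Finset (V ⊕ (↥G.edgeSet ⊕ V × Fin (k + 3)))) (hS : S.card ≤ k) :
    (∃ w : ((↑S : Set (V ⊕ (↥G.edgeSet ⊕ V × Fin (k + 3))))ᶜ : Set _),
      ∀ w', ¬ ((subdividePendant G k).induce (↑S : Set _)ᶜ).Adj w w') ↔
    ∃ u : V, Sum.inl u ∈ S := by
  constructor
  · rintro ⟨⟨w, hw⟩, hiso⟩
    simp only [Set.mem_compl_iff, Finset.mem_coe] at hw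
    match w with
    | Sum.inl u =>
      obtain ⟨i, hi⟩ := exists_pendant_not_mem G k S hS u
      exfalso
      exact hiso ⟨Sum.inr (Sum.inr (u, i)), by simpa using hi⟩
        (by simp [subdividePendant, fromRel_adj])
    | Sum.inr (Sum.inl e) =>
      obtain ⟨s, hs⟩ := e
      induction s using Sym2.ind with
      | _ x y =>
        refine ⟨x, ?_⟩
        by_contra hx
        exact hiso ⟨Sum.inl x, by simpa using hx⟩
          (by simp [subdividePendant, fromRel_adj])
    | Sum.inr (Sum.inr (u, i)) =>
      refine ⟨u, ?_⟩
      by_contra hu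
      exact hiso ⟨Sum.inl u, by simpa using hu⟩
        (by simp [subdividePendant, fromRel_adj])
  · rintro ⟨u, hu⟩
    obtain ⟨i, hi⟩ := exists_pendant_not_mem G k S hS u
    refine ⟨⟨Sum.inr (Sum.inr (u, i)), by simpa using hi⟩, ?_⟩
    rintro ⟨w', hw'⟩ hadj
    simp only [Set.mem_compl_iff, Finset.mem_coe] at hw'
    simp only [comap_adj, Function.Embedding.coe_subtype, subdividePendant,
      fromRel_adj] at hadj
    obtain ⟨hne, h1 | h2⟩ := hadj
    · match w' with
      | Sum.inl v => exact h1
      | Sum.inr _ => exact h1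
    · match w' with
      | Sum.inl v =>
        simp only at h2
        subst h2
        exact hw' hu
      | Sum.inr _ => exact h2
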